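/- Let a > b > 0, V > 0, k > 0, and let x, y : ℝ → ℝ be differentiable functions such that (x(t), y(t)) ≠ (0, 0) for all t ≥ 0 and such that ẋ(t) = V·cos(ψ_D(x(t), y(t))) and ẏ(t) = V·sin(ψ_D(x(t), y(t))) for all t ≥ 0. Then the function t ↦ (x(t)²/a² + y(t)²/b² − 1)² is nonincreasing on [0, ∞), and its derivative is strictly negative at every t with x(t)²/a² + y(t)²/b² ≠ 1. -/

import Mathlib

open Real

/-- The counter-clockwise tangential heading at `(x, y)`:
`atan2 (b² x, −a² y)`, i.e. the argument of the complex number `−a² y + i b² x`. -/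
noncomputable def psiT (a b x y : ℝ) : ℝ :=
  Complex.arg ⟨-(a ^ 2) * y, b ^ 2 * x⟩

/-- The offset angle `ψ_O = arctan (k (γ − 1))` with `γ = x²/a² + y²/b²`. -/
noncomputable def psiO (a b k x y : ℝ) : ℝ :=
  Real.arctan (k * (x ^ 2 / a ^ 2 + y ^ 2 / b ^ 2 - 1))

/-- The desired heading `ψ_D = ψ_T + ψ_O`. -/
noncomputable def psiD (a b k x y : ℝ) : ℝ :=
  psiT a b x y + psiO a b k x y

/-
Along the flow, `d/dt (γ - 1)² = 4 (γ - 1) V ⟨∇γ / 2, (cos ψ_D, sin ψ_D)⟩`. The tangential heading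
`ψ_T` is orthogonal to `∇γ`, and turning it by `π/2` gives an inward normal, so the component of the
heading along `∇γ` is `-μ sin ψ_O` with `μ > 0`. Since `u sin (arctan (k u)) = k u² / √(1 + k² u²)`,
the derivative is a negative multiple of `(γ - 1)²` itself.
-/

lemma mul_cos_arg_add_add_mul_sin_arg_add {z : ℂ} (hz : z ≠ 0) (p q φ : ℝ) :
    p * cos (z.arg + φ) + q * sin (z.arg + φ) =
      ((p * z.re + q * z.im) * cos φ + (q * z.re - p * z.im) * sin φ) / ‖z‖ := by
  have hz' : ‖z‖ ≠ 0 := norm_ne_zero_iff.mpr hz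
  rw [cos_add, sin_add, Complex.cos_arg hz, Complex.sin_arg]
  field_simp
  ring

lemma mul_sin_arctan_mul (k u : ℝ) :
    u * sin (arctan (k * u)) = k / √(1 + (k * u) ^ 2) * u ^ 2 := by
  rw [sin_arctan]
  ring

lemma exists_pos_mul_cos_psiD_add_mul_sin_psiD_eq {a b : ℝ} (ha : a ≠ 0) (hb : b ≠ 0) (k : ℝ)
    {c d : ℝ} (hcd : (c, d) ≠ (0, 0)) :
    ∃ μ > 0, c / a ^ 2 * cos (psiD a b k c d) + d / b ^ 2 * sin (psiD a b k c d) =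
      -(μ * sin (psiO a b k c d)) := by
  set z : ℂ := ⟨-(a ^ 2) * d, b ^ 2 * c⟩
  have hz : z ≠ 0 := by
    intro h
    apply hcd
    simp_all [z, Complex.ext_iff]
  have hnorm : ‖z‖ ^ 2 = (a ^ 2 * d) ^ 2 + (b ^ 2 * c) ^ 2 := by
    rw [Complex.sq_norm, Complex.normSq_mk]
    ring
  refine ⟨‖z‖ / (a ^ 2 * b ^ 2), by positivity, ?_⟩
  have hz' : ‖z‖ ≠ 0 := norm_ne_zero_iff.mpr hz
  rw [psiD, psiT, mul_cos_arg_add_add_mul_sin_arg_add hz]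
  field_simp
  linear_combination sin (psiO a b k c d) * hnorm

lemma hasDerivAt_sq_ellipse_sub_one {x y : ℝ → ℝ} {t : ℝ} (hx : DifferentiableAt ℝ x t)
    (hy : DifferentiableAt ℝ y t) (a b : ℝ) :
    HasDerivAt (fun τ => (x τ ^ 2 / a ^ 2 + y τ ^ 2 / b ^ 2 - 1) ^ 2)
      (4 * (x t ^ 2 / a ^ 2 + y t ^ 2 / b ^ 2 - 1) *
        (x t / a ^ 2 * deriv x t + y t / b ^ 2 * deriv y t)) t := by
  refine (((((hx.hasDerivAt.fun_pow 2).div_const (a ^ 2)).fun_add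
    ((hy.hasDerivAt.fun_pow 2).div_const (b ^ 2))).sub_const 1).fun_pow 2).congr_deriv ?_
  push_cast
  ring

lemma exists_pos_deriv_sq_ellipse_sub_one_eq {a b V k : ℝ} (ha : a ≠ 0) (hb : b ≠ 0)
    (hV : 0 < V) (hk : 0 < k) {x y : ℝ → ℝ} {t : ℝ} (hx : DifferentiableAt ℝ x t)
    (hy : DifferentiableAt ℝ y t) (hne : (x t, y t) ≠ (0, 0))
    (hxd : deriv x t = V * cos (psiD a b k (x t) (y t)))
    (hyd : deriv y t = V * sin (psiD a b k (x t) (y t))) :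
    ∃ c > 0, deriv (fun τ => (x τ ^ 2 / a ^ 2 + y τ ^ 2 / b ^ 2 - 1) ^ 2) t =
      -(c * (x t ^ 2 / a ^ 2 + y t ^ 2 / b ^ 2 - 1) ^ 2) := by
  obtain ⟨μ, hμ, hradial⟩ := exists_pos_mul_cos_psiD_add_mul_sin_psiD_eq ha hb k hne
  rw [psiO] at hradial
  set u := x t ^ 2 / a ^ 2 + y t ^ 2 / b ^ 2 - 1
  refine ⟨4 * V * μ * (k / √(1 + (k * u) ^ 2)), by positivity, ?_⟩
  have hvelocity : x t / a ^ 2 * deriv x t + y t / b ^ 2 * deriv y t =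
      -(V * μ * sin (arctan (k * u))) := by
    rw [hxd, hyd]
    linear_combination V * hradial
  rw [(hasDerivAt_sq_ellipse_sub_one hx hy a b).deriv, hvelocity]
  linear_combination -4 * V * μ * mul_sin_arctan_mul k u

theorem lyapunov_nonincreasing
    (a b V k : ℝ) (hab : b < a) (hb : 0 < b) (hV : 0 < V) (hk : 0 < k)
    (x y : ℝ → ℝ) (hx : Differentiable ℝ x) (hy : Differentiable ℝ y)
    (hne : ∀ t : ℝ, 0 ≤ t → (x t, y t) ≠ (0, 0))
    (hxd : ∀ t : ℝ, 0 ≤ t → deriv x t = V * Real.cos (psiD a b k (x t) (y t)))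
    (hyd : ∀ t : ℝ, 0 ≤ t → deriv y t = V * Real.sin (psiD a b k (x t) (y t))) :
    AntitoneOn (fun t => (x t ^ 2 / a ^ 2 + y t ^ 2 / b ^ 2 - 1) ^ 2) (Set.Ici (0 : ℝ)) ∧
    ∀ t : ℝ, 0 ≤ t → x t ^ 2 / a ^ 2 + y t ^ 2 / b ^ 2 ≠ 1 →
      deriv (fun τ => (x τ ^ 2 / a ^ 2 + y τ ^ 2 / b ^ 2 - 1) ^ 2) t < 0 := by
  have ha : a ≠ 0 := (hb.trans hab).ne'
  have hderiv (t : ℝ) (ht : 0 ≤ t) := exists_pos_deriv_sq_ellipse_sub_one_eq ha hb.ne' hV hk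
    (hx t) (hy t) (hne t ht) (hxd t ht) (hyd t ht)
  have hdiff : Differentiable ℝ (fun t => (x t ^ 2 / a ^ 2 + y t ^ 2 / b ^ 2 - 1) ^ 2) :=
    fun t => (hasDerivAt_sq_ellipse_sub_one (hx t) (hy t) a b).differentiableAt
  refine ⟨antitoneOn_of_deriv_nonpos (convex_Ici 0) hdiff.continuous.continuousOn
    hdiff.differentiableOn fun t ht => ?_, fun t ht hγ => ?_⟩
  · obtain ⟨c, hc, heq⟩ := hderiv t (interior_subset ht)
    rw [heq, neg_nonpos]
    exact mul_nonneg hc.le (sq_nonneg _)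
  · obtain ⟨c, hc, heq⟩ := hderiv t ht
    rw [heq, neg_lt_zero]
    exact mul_pos hc (sq_pos_of_ne_zero (sub_ne_zero.mpr hγ))
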